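/- Let X : ℝ → Matrix (Fin n) (Fin n) ℝ be continuous on [0, b]. Then the matrix-valued function ℱ(X) is differentiable on (0, b) and satisfies the matrix differential equation d/dx ℱ(X)(x) = ℱ(X)(x) · X(x), with ℱ(X)(0) = 1. -/

import Mathlib

open MeasureTheory Matrix

/- Matrices are equipped with the elementwise sup norm. -/
attribute [local instance] Matrix.normedAddCommGroup Matrix.normedSpace

/-- Terms of the left integral series: `E_0(x) = 1`, `E_{k+1}(x) = ∫_0^x X(t) * E_k(t) dt`. -/
noncomputable def lterm {ι : Type*} [Fintype ι] [DecidableEq ι]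
    (X : ℝ → Matrix ι ι ℝ) : ℕ → ℝ → Matrix ι ι ℝ
  | 0, _ => 1
  | k + 1, x => ∫ t in (0:ℝ)..x, X t * lterm X k t

/-- The left integral series `ℰ(X)(x) = ∑_{k=0}^∞ E_k(x)`. -/
noncomputable def ES {ι : Type*} [Fintype ι] [DecidableEq ι]
    (X : ℝ → Matrix ι ι ℝ) (x : ℝ) : Matrix ι ι ℝ := ∑' k, lterm X k x

/-- Terms of the right integral series: `F_0(x) = 1`, `F_{k+1}(x) = ∫_0^x F_k(t) * X(t) dt`. -/
noncomputable def rterm {ι : Type*} [Fintype ι] [DecidableEq ι]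
    (X : ℝ → Matrix ι ι ℝ) : ℕ → ℝ → Matrix ι ι ℝ
  | 0, _ => 1
  | k + 1, x => ∫ t in (0:ℝ)..x, rterm X k t * X t

/-- The right integral series `ℱ(X)(x) = ∑_{k=0}^∞ F_k(x)`. -/
noncomputable def FS {ι : Type*} [Fintype ι] [DecidableEq ι]
    (X : ℝ → Matrix ι ι ℝ) (x : ℝ) : Matrix ι ι ℝ := ∑' k, rterm X k x

/-!
Let `‖X‖ ≤ M` on `[0, b]` and `c = |ι|`, so that `‖A * B‖ ≤ c ‖A‖ ‖B‖` for the entrywise sup norm.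
Induction gives `‖F_k(x)‖ ≤ (c M x)^k / k!`, hence both `∑ F_k` and the series of derivatives
`F_{k+1}' = F_k X` are dominated on `[0, b]` by exponential series. Differentiating term by term
gives `ℱ' = ∑ F_k X = ℱ X`; at `0` every `F_{k+1}` is an integral over an empty interval.
-/

open Set Topology

namespace Matrix

/- `Matrix` is a type synonym, so instance search does not see the instance for function types. -/
instance pseudoMetrizableSpace {m n α : Type*} [Finite m] [Finite n] [TopologicalSpace α]
    [TopologicalSpace.PseudoMetrizableSpace α] :
    TopologicalSpace.PseudoMetrizableSpace (Matrix m n α) :=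
  inferInstanceAs (TopologicalSpace.PseudoMetrizableSpace (m → n → α))

variable {l m n α : Type*} [Fintype l] [Fintype m] [Fintype n] [NormedRing α]

theorem norm_mul_le_card_mul_norm_mul_norm (A : Matrix l m α) (B : Matrix m n α) :
    ‖A * B‖ ≤ Fintype.card m * ‖A‖ * ‖B‖ := by
  refine (Matrix.norm_le_iff (by positivity)).2 fun i j => ?_
  calc ‖∑ k, A i k * B k j‖ ≤ ∑ k, ‖A i k‖ * ‖B k j‖ :=
        (norm_sum_le _ _).trans (Finset.sum_le_sum fun k _ => norm_mul_le _ _)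
    _ ≤ ∑ _k : m, ‖A‖ * ‖B‖ := by
        gcongr <;> exact norm_entry_le_entrywise_sup_norm _
    _ = Fintype.card m * ‖A‖ * ‖B‖ := by simp [mul_assoc]

theorem norm_one_le [DecidableEq n] [NormOneClass α] : ‖(1 : Matrix n n α)‖ ≤ 1 :=
  (Matrix.norm_le_iff zero_le_one).2 fun i j => by
    rw [one_apply]
    split_ifs <;> simp

end Matrix

theorem integral_mul_pow_div_factorial (a x : ℝ) (k : ℕ) :
    ∫ t in (0:ℝ)..x, a * (a * t) ^ k / k.factorial = (a * x) ^ (k + 1) / (k + 1).factorial := by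
  have hintegrand : ∀ t : ℝ, a * (a * t) ^ k / k.factorial = a ^ (k + 1) / k.factorial * t ^ k :=
    fun t => by ring
  simp_rw [hintegrand, intervalIntegral.integral_const_mul, integral_pow, Nat.factorial_succ]
  push_cast
  field_simp
  ring

section RightIntegralSeries

variable {ι : Type*} [Fintype ι] [DecidableEq ι] {X : ℝ → Matrix ι ι ℝ} {b M x : ℝ}

@[simp] theorem rterm_zero (X : ℝ → Matrix ι ι ℝ) (x : ℝ) : rterm X 0 x = 1 := rfl

theorem rterm_succ (X : ℝ → Matrix ι ι ℝ) (k : ℕ) (x : ℝ) :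
    rterm X (k + 1) x = ∫ t in (0:ℝ)..x, rterm X k t * X t := rfl

theorem rterm_succ_apply_zero (X : ℝ → Matrix ι ι ℝ) (k : ℕ) : rterm X (k + 1) 0 = 0 :=
  intervalIntegral.integral_same

theorem FS_zero (X : ℝ → Matrix ι ι ℝ) : FS X 0 = 1 :=
  (tsum_eq_single 0 fun k hk => by
    obtain ⟨k, rfl⟩ := Nat.exists_eq_succ_of_ne_zero hk
    exact rterm_succ_apply_zero X k).trans (rterm_zero X 0)

theorem continuousOn_rterm (hb : 0 ≤ b) (hX : ContinuousOn X (Icc 0 b)) (k : ℕ) :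
    ContinuousOn (rterm X k) (Icc 0 b) := by
  induction k with
  | zero => exact continuousOn_const
  | succ k ih =>
    rw [← uIcc_of_le hb] at ih hX ⊢
    exact intervalIntegral.continuousOn_primitive_interval
      ((ih.mul hX).integrableOn_compact isCompact_uIcc)

theorem hasDerivAt_rterm_succ (hX : ContinuousOn X (Icc 0 b)) (k : ℕ) (hx : x ∈ Ioo 0 b) :
    HasDerivAt (rterm X (k + 1)) (rterm X k x * X x) x := by
  have hcont := (continuousOn_rterm (hx.1.le.trans hx.2.le) hX k).mul hX
  have hnhds : Icc 0 b ∈ 𝓝 x := Icc_mem_nhds hx.1 hx.2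
  exact intervalIntegral.integral_hasDerivAt_right
    ((hcont.mono (Icc_subset_Icc_right hx.2.le)).intervalIntegrable_of_Icc hx.1.le)
    ⟨Icc 0 b, hnhds, hcont.aestronglyMeasurable measurableSet_Icc⟩ (hcont.continuousAt hnhds)

theorem norm_rterm_le (hM : 0 ≤ M) (hXM : ∀ t ∈ Icc 0 b, ‖X t‖ ≤ M) (k : ℕ) (hx : x ∈ Icc 0 b) :
    ‖rterm X k x‖ ≤ (Fintype.card ι * M * x) ^ k / k.factorial := by
  induction k generalizing x with
  | zero => simpa using Matrix.norm_one_le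
  | succ k ih =>
    set c : ℝ := Fintype.card ι * M
    have hpointwise : ∀ t ∈ Icc 0 x, ‖rterm X k t * X t‖ ≤ c * (c * t) ^ k / k.factorial :=
      fun t ht => by
        have htb : t ∈ Icc 0 b := ⟨ht.1, ht.2.trans hx.2⟩
        calc ‖rterm X k t * X t‖ ≤ Fintype.card ι * ‖rterm X k t‖ * ‖X t‖ :=
              norm_mul_le_card_mul_norm_mul_norm _ _
          _ ≤ Fintype.card ι * ((c * t) ^ k / k.factorial) * M := by
              have hc : 0 ≤ c * t := mul_nonneg (by positivity) ht.1
              gcongr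
              exacts [ih htb, hXM t htb]
          _ = c * (c * t) ^ k / k.factorial := by ring
    rw [rterm_succ, ← integral_mul_pow_div_factorial]
    exact intervalIntegral.norm_integral_le_of_norm_le hx.1
      (ae_of_all _ fun t ht => hpointwise t (Ioc_subset_Icc_self ht))
      (by apply Continuous.intervalIntegrable; fun_prop)

theorem norm_rterm_le_of_mem_Icc (hM : 0 ≤ M) (hXM : ∀ t ∈ Icc 0 b, ‖X t‖ ≤ M) (k : ℕ)
    (hx : x ∈ Icc 0 b) :
    ‖rterm X k x‖ ≤ (Fintype.card ι * M * b) ^ k / k.factorial :=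
  (norm_rterm_le hM hXM k hx).trans (by have : 0 ≤ x := hx.1; gcongr; exact hx.2)

theorem summable_rterm (hM : 0 ≤ M) (hXM : ∀ t ∈ Icc 0 b, ‖X t‖ ≤ M) (hx : x ∈ Icc 0 b) :
    Summable fun k => rterm X k x :=
  .of_norm_bounded (Real.summable_pow_div_factorial _)
    fun k => norm_rterm_le_of_mem_Icc hM hXM k hx

theorem hasDerivAt_tsum_rterm_succ (hM : 0 ≤ M) (hX : ContinuousOn X (Icc 0 b))
    (hXM : ∀ t ∈ Icc 0 b, ‖X t‖ ≤ M) (hx : x ∈ Ioo 0 b) :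
    HasDerivAt (fun y => ∑' k, rterm X (k + 1) y) (∑' k, rterm X k x * X x) x := by
  set c : ℝ := (Fintype.card ι : ℝ)
  have hbound : ∀ k, ∀ y ∈ Ioo 0 b,
      ‖rterm X k y * X y‖ ≤ c * ((c * M * b) ^ k / k.factorial) * M := fun k y hy => by
    have hy' := Ioo_subset_Icc_self hy
    calc ‖rterm X k y * X y‖ ≤ c * ‖rterm X k y‖ * ‖X y‖ :=
          norm_mul_le_card_mul_norm_mul_norm _ _
      _ ≤ c * ((c * M * b) ^ k / k.factorial) * M := by
          have : 0 ≤ c * M * b := mul_nonneg (by positivity) (hy'.1.trans hy'.2)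
          gcongr
          exacts [norm_rterm_le_of_mem_Icc hM hXM k hy', hXM y hy']
  exact hasDerivAt_tsum_of_isPreconnected
    (((Real.summable_pow_div_factorial _).mul_left c).mul_right M) isOpen_Ioo isPreconnected_Ioo
    (fun k y hy => hasDerivAt_rterm_succ hX k hy) hbound hx
    ((summable_nat_add_iff 1).2 (summable_rterm hM hXM (Ioo_subset_Icc_self hx))) hx

end RightIntegralSeries

/-- `ℱ(X)` solves `d/dx ℱ(X)(x) = ℱ(X)(x) * X(x)`, `ℱ(X)(0) = 1`. -/
theorem FS_hasDerivAt {n : ℕ} (b : ℝ) (X : ℝ → Matrix (Fin n) (Fin n) ℝ)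
    (hX : ContinuousOn X (Set.Icc 0 b)) :
    (∀ x ∈ Set.Ioo (0:ℝ) b, HasDerivAt (FS X) (FS X x * X x) x) ∧ FS X 0 = 1 := by
  refine ⟨fun x hx => ?_, FS_zero X⟩
  obtain ⟨C, hC⟩ := isCompact_Icc.exists_bound_of_continuousOn hX
  have hM : 0 ≤ max C 0 := le_max_right _ _
  have hXM : ∀ t ∈ Icc 0 b, ‖X t‖ ≤ max C 0 := fun t ht => (hC t ht).trans (le_max_left _ _)
  have hFS : FS X =ᶠ[𝓝 x] fun y => 1 + ∑' k, rterm X (k + 1) y := by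
    filter_upwards [Ioo_mem_nhds hx.1 hx.2] with y hy
    exact (summable_rterm hM hXM (Ioo_subset_Icc_self hy)).tsum_eq_zero_add
  have hderiv := (hasDerivAt_tsum_rterm_succ hM hX hXM hx).const_add 1
  rw [(summable_rterm hM hXM (Ioo_subset_Icc_self hx)).tsum_mul_right] at hderiv
  exact hderiv.congr_of_eventuallyEq hFS
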